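/- arXiv:1608.02209 — 2 statements merged into one kernel-verified Lean document; each statement's English description precedes it below -/
import Mathlib

section
/- Every collection of edge probabilities π = {π^{(k)}_{[vu]} ∈ (0,1) : k = 1,…,K, 1 ≤ u < v ≤ V} admits a representation logit(π^{(k)}_{[vu]}) = μ + Σ_{r=1}^R x̄_{vr} x̄_{ur} + Σ_{h=1}^H x^{(k)}_{vh} x^{(k)}_{uh} for some μ ∈ ℝ, some dimensions R, H ∈ ℕ, shared coordinates x̄_{vr} ∈ ℝ, and layer-specific coordinates x^{(k)}_{vh} ∈ ℝ. -/
/-!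
Only the layer-specific term is needed. For a pair `a < b` of actors give actor `a` the
coordinate `1` and actor `b` the coordinate `L b a`, and everyone else `0`; with one such
coordinate per pair, the inner product of the coordinate vectors of `v` and `u < v` picks out
exactly `L v u`. Applying this to the logits of each layer gives the representation with
`μ = 0` and no shared coordinates.
-/

section LowerPairCoord

variable {ι R : Type*} [LinearOrder ι] [Semiring R]

def lowerPairCoord (L : ι → ι → R) (w : ι) (p : {p : ι × ι // p.1 < p.2}) : R :=
  if w = p.1.1 then 1 else if w = p.1.2 then L w p.1.1 else 0

theorem lowerPairCoord_mul_eq_zero (L : ι → ι → R) {u v : ι} (huv : u < v)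
    {p : {p : ι × ι // p.1 < p.2}} (hp : p ≠ ⟨(u, v), huv⟩) :
    lowerPairCoord L v p * lowerPairCoord L u p = 0 := by
  obtain ⟨⟨a, b⟩, hab⟩ := p
  dsimp only at hab
  have hne : ¬(a = u ∧ b = v) := fun ⟨ha, hb⟩ => hp (by subst ha hb; rfl)
  by_cases hv : v = a ∨ v = b
  · have hua : u ≠ a := by rintro rfl; rcases hv with rfl | rfl <;> order
    have hub : u ≠ b := by rintro rfl; rcases hv with rfl | rfl <;> order
    simp [lowerPairCoord, hua, hub]
  · obtain ⟨hva, hvb⟩ := not_or.mp hv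
    simp [lowerPairCoord, hva, hvb]

theorem sum_lowerPairCoord_mul [Fintype ι] (L : ι → ι → R) {u v : ι} (huv : u < v) :
    ∑ p, lowerPairCoord L v p * lowerPairCoord L u p = L v u := by
  rw [Fintype.sum_eq_single ⟨(u, v), huv⟩ fun p hp => lowerPairCoord_mul_eq_zero L huv hp]
  simp [lowerPairCoord, huv.ne']

end LowerPairCoord

theorem edge_probabilities_bilinear_representation_general (K V : ℕ)
    (π : Fin K → Fin V → Fin V → ℝ) :
    ∃ (μ : ℝ) (R H : ℕ) (xbar : Fin V → Fin R → ℝ) (x : Fin K → Fin V → Fin H → ℝ),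
      ∀ k v u, u < v →
        Real.log (π k v u / (1 - π k v u)) =
          μ + (∑ r, xbar v r * xbar u r) + (∑ h, x k v h * x k u h) := by
  let logit : Fin K → Fin V → Fin V → ℝ := fun k v u => Real.log (π k v u / (1 - π k v u))
  let e := Fintype.equivFin {p : Fin V × Fin V // p.1 < p.2}
  refine ⟨0, 0, _, fun _ => Fin.elim0, fun k w h => lowerPairCoord (logit k) w (e.symm h), ?_⟩
  intro k v u huv
  rw [e.symm.sum_comp fun p => lowerPairCoord (logit k) v p * lowerPairCoord (logit k) u p,
    sum_lowerPairCoord_mul _ huv]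
  simp [logit]

/-- Proposition 1 (static version): any collection of edge probabilities in (0,1)
admits the bilinear logit factorization with a baseline, shared coordinates and
layer-specific coordinates. -/
theorem edge_probabilities_bilinear_representation (K V : ℕ) (hK : 1 ≤ K) (hV : 2 ≤ V)
    (π : Fin K → Fin V → Fin V → ℝ)
    (hπ : ∀ k v u, u < v → π k v u ∈ Set.Ioo (0 : ℝ) 1) :
    ∃ (μ : ℝ) (R H : ℕ) (xbar : Fin V → Fin R → ℝ) (x : Fin K → Fin V → Fin H → ℝ),
      ∀ k v u, u < v →
        Real.log (π k v u / (1 - π k v u)) =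
          μ + (∑ r, xbar v r * xbar u r) + (∑ h, x k v h * x k u h) :=
  edge_probabilities_bilinear_representation_general K V π
end

section
/- Under the same setup with two layers k ≠ g, the covariance between z^{(k)}_{[vu]} and z^{(g)}_{[vu]} (same actor pair, different layers, same time) equals 1 + Σ_{r=1}^R τ_r^{-2}. -/
/-!
Write `z⁽ᵏ⁾ = μ + S + Tₖ`, where `S = ∑ᵣ x̄_{vr} x̄_{ur}` is built from the shared coordinates and
`Tₖ` from the coordinates of layer `k`. The three blocks are functions of disjoint sets of
independent coordinates, hence independent, so by bilinearity
`Cov(z⁽ᵏ⁾, z⁽ᵍ⁾) = Var(μ + S) = Var μ + ∑ᵣ Var(x̄_{vr} x̄_{ur})`, and the variance of a product of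
independent centred variables is the product of their variances, `τᵣ⁻¹ · τᵣ⁻¹`.
-/

open MeasureTheory ProbabilityTheory

noncomputable def cov {Ω : Type*} [MeasurableSpace Ω] (P : Measure Ω)
    (X Y : Ω → ℝ) : ℝ :=
  (∫ ω, X ω * Y ω ∂P) - (∫ ω, X ω ∂P) * (∫ ω, Y ω ∂P)

open Finset

instance ENNReal.holderTriple_four_four_two : ENNReal.HolderTriple 4 4 2 where
  inv_add_inv_eq_inv := by
    have h := ENNReal.add_halves (2⁻¹ : ENNReal)
    rw [ENNReal.div_eq_inv_mul, ← ENNReal.mul_inv (by simp) (by simp)] at h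
    norm_num at h
    exact h

namespace ProbabilityTheory

variable {Ω ι κ : Type*} [MeasurableSpace Ω] {μ : Measure Ω}

lemma cov_eq_covariance [IsProbabilityMeasure μ] {X Y : Ω → ℝ} (hX : MemLp X 2 μ)
    (hY : MemLp Y 2 μ) : cov μ X Y = cov[X, Y; μ] := by
  rw [covariance_eq_sub hX hY, cov]
  rfl

lemma covariance_add_add_eq_variance [IsFiniteMeasure μ] {U V W : Ω → ℝ} (hU : MemLp U 2 μ)
    (hV : MemLp V 2 μ) (hW : MemLp W 2 μ) (hUV : U ⟂ᵢ[μ] V) (hUW : U ⟂ᵢ[μ] W)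
    (hVW : V ⟂ᵢ[μ] W) : cov[U + V, U + W; μ] = Var[U; μ] := by
  rw [covariance_add_left hU hV (hU.add hW), covariance_add_right hU hU hW,
    covariance_add_right hV hU hW, hUW.covariance_eq_zero hU hW,
    hUV.symm.covariance_eq_zero hV hU, hVW.covariance_eq_zero hV hW,
    covariance_self hU.aestronglyMeasurable.aemeasurable]
  ring

lemma IndepFun.variance_mul_of_integral_eq_zero {X Y : Ω → ℝ} (h : X ⟂ᵢ[μ] Y)
    (hX : AEMeasurable X μ) (hY : AEMeasurable Y μ) (hX0 : μ[X] = 0) (hY0 : μ[Y] = 0) :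
    Var[X * Y; μ] = Var[X; μ] * Var[Y; μ] := by
  have hXY0 : μ[X * Y] = 0 := by
    rw [h.integral_mul_eq_mul_integral hX.aestronglyMeasurable hY.aestronglyMeasurable, hX0,
      zero_mul]
  have hsq : (fun ω ↦ X ω ^ 2) ⟂ᵢ[μ] (fun ω ↦ Y ω ^ 2) :=
    h.comp (measurable_id.pow_const 2) (measurable_id.pow_const 2)
  rw [variance_of_integral_eq_zero (hX.mul hY) hXY0, variance_of_integral_eq_zero hX hX0,
    variance_of_integral_eq_zero hY hY0, ← hsq.integral_fun_mul_eq_mul_integral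
      (hX.pow_const 2).aestronglyMeasurable (hY.pow_const 2).aestronglyMeasurable]
  simp only [Pi.mul_apply, mul_pow]

lemma iIndepFun.indepFun_comp_of_dependsOn {β γ γ' : Type*} [MeasurableSpace β] [Inhabited β]
    [MeasurableSpace γ] [MeasurableSpace γ'] {f : ι → Ω → β} (hf : iIndepFun f μ)
    (hmeas : ∀ i, AEMeasurable (f i) μ) {S T : Finset ι} (hST : Disjoint S T)
    {φ : (ι → β) → γ} {ψ : (ι → β) → γ'} (hφ : Measurable φ) (hψ : Measurable ψ)
    (hφS : DependsOn φ S) (hψT : DependsOn ψ T) :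
    (fun ω ↦ φ fun i ↦ f i ω) ⟂ᵢ[μ] (fun ω ↦ ψ fun i ↦ f i ω) := by
  classical
  -- `φ` and `ψ` factor measurably through the restrictions to `S` and `T`
  let extend (s : Finset ι) (y : s → β) (i : ι) : β :=
    if h : i ∈ s then y ⟨i, h⟩ else default
  have hextend (s : Finset ι) : Measurable (extend s) := by
    refine measurable_pi_lambda _ fun i ↦ ?_
    by_cases h : i ∈ s
    · simpa [extend, h] using measurable_pi_apply (⟨i, h⟩ : s)
    · simp [extend, h]
  have hrestrict (s : Finset ι) (x : ι → β) : ∀ i ∈ (s : Set ι), x i = extend s (x ·) i :=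
    fun i hi ↦ by simp [extend, Finset.mem_coe.mp hi]
  convert (hf.indepFun_finset₀ S T hST hmeas).comp (hφ.comp (hextend S)) (hψ.comp (hextend T))
    using 1
  · exact funext fun ω ↦ hφS (hrestrict S _)
  · exact funext fun ω ↦ hψT (hrestrict T _)

variable {f : ι → Ω → ℝ}

lemma memLp_two_fun_sum_mul_of_memLp_four (h4 : ∀ i, MemLp (f i) 4 μ) (a b : κ → ι) (s : Finset κ) :
    MemLp (fun ω ↦ ∑ j ∈ s, f (a j) ω * f (b j) ω) 2 μ :=
  memLp_finsetSum s fun j _ ↦ (h4 (b j)).mul (h4 (a j))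

lemma iIndepFun.variance_fun_sum_mul (hf : iIndepFun f μ) (h4 : ∀ i, MemLp (f i) 4 μ)
    (h0 : ∀ i, μ[f i] = 0) {a b : κ → ι} (ha : Function.Injective a)
    (hb : Function.Injective b) (hab : ∀ j k, a j ≠ b k) (s : Finset κ) :
    Var[fun ω ↦ ∑ j ∈ s, f (a j) ω * f (b j) ω; μ]
      = ∑ j ∈ s, Var[f (a j); μ] * Var[f (b j); μ] := by
  have hmeas i : AEMeasurable (f i) μ := (h4 i).aestronglyMeasurable.aemeasurable
  have hsum : (fun ω ↦ ∑ j ∈ s, f (a j) ω * f (b j) ω) = ∑ j ∈ s, f (a j) * f (b j) := by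
    ext ω
    simp
  rw [hsum, IndepFun.variance_sum fun j _ ↦ (h4 (b j)).mul (h4 (a j))]
  · refine Finset.sum_congr rfl fun j _ ↦ ?_
    exact (hf.indepFun (hab j j)).variance_mul_of_integral_eq_zero (hmeas _) (hmeas _)
      (h0 _) (h0 _)
  · intro j _ k _ hjk
    exact hf.indepFun_mul_mul₀ hmeas _ _ _ _ (ha.ne hjk) (hab j k) (hab k j).symm (hb.ne hjk)

end ProbabilityTheory

section LatentSpaceModel

/-- The latent variables of a two-layer model for one actor pair `(v, u)`: the intercept `μ`, the
shared coordinates `x̄_{vr}, x̄_{ur}` and the layer-specific coordinates `x⁽ᵏ⁾_{vh}, x⁽ᵏ⁾_{uh}`.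
A trailing `true` stands for the actor `v`, `false` for `u`. -/
abbrev LatentIndex (R H : ℕ) := Unit ⊕ (Fin R × Bool) ⊕ (Bool × Fin H × Bool)

variable {R H : ℕ}

def sharedTerm (x : LatentIndex R H → ℝ) : ℝ :=
  ∑ r, x (.inr (.inl (r, true))) * x (.inr (.inl (r, false)))

def layerTerm (k : Bool) (x : LatentIndex R H → ℝ) : ℝ :=
  ∑ h, x (.inr (.inr (k, h, true))) * x (.inr (.inr (k, h, false)))

def sharedIndices : Finset (LatentIndex R H) := univ.image fun p ↦ .inr (.inl p)

def layerIndices (k : Bool) : Finset (LatentIndex R H) := univ.image fun p ↦ .inr (.inr (k, p))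

@[fun_prop]
lemma measurable_sharedTerm : Measurable (sharedTerm (R := R) (H := H)) := by
  unfold sharedTerm
  fun_prop

@[fun_prop]
lemma measurable_layerTerm (k : Bool) : Measurable (layerTerm (R := R) (H := H) k) := by
  unfold layerTerm
  fun_prop

variable {Ω : Type*} [MeasurableSpace Ω] {μ : Measure Ω} {f : LatentIndex R H → Ω → ℝ}

lemma indepFun_intercept_sharedTerm (hf : iIndepFun f μ) (hmeas : ∀ i, AEMeasurable (f i) μ) :
    f (.inl ()) ⟂ᵢ[μ] fun ω ↦ sharedTerm (f · ω) :=
  hf.indepFun_comp_of_dependsOn (S := {.inl ()}) (T := sharedIndices) (φ := fun x ↦ x (.inl ()))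
    hmeas (by simp [sharedIndices]) (by fun_prop) (by fun_prop) (fun _ _ h ↦ h _ (by simp))
    (fun _ _ h ↦ by simp (disch := simp [sharedIndices]) only [sharedTerm, h])

lemma indepFun_common_layerTerm (hf : iIndepFun f μ) (hmeas : ∀ i, AEMeasurable (f i) μ)
    (k : Bool) :
    (fun ω ↦ f (.inl ()) ω + sharedTerm (f · ω)) ⟂ᵢ[μ] fun ω ↦ layerTerm k (f · ω) :=
  hf.indepFun_comp_of_dependsOn (S := insert (.inl ()) sharedIndices) (T := layerIndices k)
    (φ := fun x ↦ x (.inl ()) + sharedTerm x) (ψ := layerTerm k) hmeas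
    (by simp [disjoint_left, sharedIndices, layerIndices]) (by fun_prop) (by fun_prop)
    (fun _ _ h ↦ by simp (disch := simp [sharedIndices]) only [sharedTerm, h])
    (fun _ _ h ↦ by simp (disch := simp [layerIndices]) only [layerTerm, h])

lemma indepFun_layerTerm (hf : iIndepFun f μ) (hmeas : ∀ i, AEMeasurable (f i) μ) {k g : Bool}
    (hkg : k ≠ g) : (fun ω ↦ layerTerm k (f · ω)) ⟂ᵢ[μ] fun ω ↦ layerTerm g (f · ω) :=
  hf.indepFun_comp_of_dependsOn (S := layerIndices k) (T := layerIndices g)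
    (φ := layerTerm k) (ψ := layerTerm g) hmeas
    (by simp [disjoint_left, layerIndices, hkg.symm]) (by fun_prop) (by fun_prop)
    (fun _ _ h ↦ by simp (disch := simp [layerIndices]) only [layerTerm, h])
    (fun _ _ h ↦ by simp (disch := simp [layerIndices]) only [layerTerm, h])

end LatentSpaceModel

/-- Covariance between the log-odds of the same actor pair in two different
layers equals `1 + ∑_r τ_r⁻²`: the shared coordinates are common to the two
layers while the layer-specific coordinates are independent between layers. -/
theorem logodds_cov_same_pair_different_layers
    {Ω : Type*} [MeasurableSpace Ω] (P : Measure Ω) [IsProbabilityMeasure P]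
    (R H : ℕ) (τ : Fin R → ℝ)
    (f : (Unit ⊕ (Fin R × Bool) ⊕ (Bool × Fin H × Bool)) → Ω → ℝ)
    (hindep : iIndepFun f P)
    (hL4 : ∀ i, MemLp (f i) 4 P)
    (hmean : ∀ i, ∫ ω, f i ω ∂P = 0)
    (hvarμ : variance (f (Sum.inl ())) P = 1)
    (hvarshared : ∀ r b, variance (f (Sum.inr (Sum.inl (r, b)))) P = (τ r)⁻¹)
    (z : Bool → Ω → ℝ)
    (hz : ∀ layer ω, z layer ω = f (Sum.inl ()) ω
      + (∑ r, f (Sum.inr (Sum.inl (r, true))) ω * f (Sum.inr (Sum.inl (r, false))) ω)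
      + (∑ h, f (Sum.inr (Sum.inr (layer, h, true))) ω
            * f (Sum.inr (Sum.inr (layer, h, false))) ω)) :
    cov P (z true) (z false) = 1 + ∑ r, ((τ r)⁻¹) ^ 2 := by
  have hmeas i : AEMeasurable (f i) P := (hL4 i).aestronglyMeasurable.aemeasurable
  set M := f (.inl ())
  set S : Ω → ℝ := fun ω ↦ sharedTerm (f · ω)
  set T : Bool → Ω → ℝ := fun k ω ↦ layerTerm k (f · ω)
  have hM : MemLp M 2 P := (hL4 _).mono_exponent (by norm_num)
  have hS : MemLp S 2 P := memLp_two_fun_sum_mul_of_memLp_four hL4 _ _ _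
  have hT k : MemLp (T k) 2 P := memLp_two_fun_sum_mul_of_memLp_four hL4 _ _ _
  have hzT k : z k = M + S + T k := funext (hz k)
  calc cov P (z true) (z false) = cov[M + S + T true, M + S + T false; P] := by
        rw [hzT, hzT, cov_eq_covariance ((hM.add hS).add (hT _)) ((hM.add hS).add (hT _))]
    _ = Var[M + S; P] :=
        covariance_add_add_eq_variance (hM.add hS) (hT _) (hT _)
          (indepFun_common_layerTerm hindep hmeas _) (indepFun_common_layerTerm hindep hmeas _)
          (indepFun_layerTerm hindep hmeas (by decide))
    _ = Var[M; P] + Var[S; P] := (indepFun_intercept_sharedTerm hindep hmeas).variance_add hM hS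
    _ = 1 + ∑ r, ((τ r)⁻¹) ^ 2 := by
        rw [hvarμ, show Var[S; P] = _ from hindep.variance_fun_sum_mul hL4 hmean
          (fun _ _ h ↦ by simpa using h) (fun _ _ h ↦ by simpa using h) (by simp) univ]
        simp [hvarshared, sq]
end
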